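/- arXiv:2209.15116 — 7 statements merged into one kernel-verified Lean document; each statement's English description precedes it below -/
import Mathlib

section
/- Let X be a topological space, A a commutative semiring, and ψ : X → A any function. Then there exists a topology τ on A such that: (i) (A, τ) is a topological semiring; (ii) ψ : X → (A, τ) is continuous; and (iii) for every semiring homomorphism φ : A → B into a topological semiring B, φ is continuous with respect to τ if and only if the composition φ ∘ ψ : X → B is continuous. -/
/-!
Take for `τ` the infimum (in Mathlib's order: the coarsest topology finer than all members) of the
topologies on `A` with continuous addition and multiplication that are coarser than the topology
coinduced by `ψ`. Both continuity properties survive infima, and for a homomorphism `φ` into a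
topological semiring the topology induced by `φ` has them too; it is coarser than the coinduced
topology exactly when `φ ∘ ψ` is continuous.
-/

universe u v w

open TopologicalSpace Topology

section SemiringCoinduced

variable {X A : Type*} [Add A] [Mul A]

/-- The finest topology on `A` with continuous addition and multiplication making `f`
continuous. -/
abbrev semiringCoinduced (f : X → A) (t : TopologicalSpace X) : TopologicalSpace A :=
  sInf {τ | @ContinuousAdd A τ _ ∧ @ContinuousMul A τ _ ∧ coinduced f t ≤ τ}

variable (f : X → A) (t : TopologicalSpace X)

theorem continuousAdd_semiringCoinduced : @ContinuousAdd A (semiringCoinduced f t) _ :=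
  continuousAdd_sInf fun _ hτ => hτ.1

theorem continuousMul_semiringCoinduced : @ContinuousMul A (semiringCoinduced f t) _ :=
  continuousMul_sInf fun _ hτ => hτ.2.1

theorem continuous_semiringCoinduced : Continuous[t, semiringCoinduced f t] f :=
  continuous_iff_coinduced_le.2 <| le_sInf fun _ hτ => hτ.2.2

theorem semiringCoinduced_le_iff {τ : TopologicalSpace A} (hadd : @ContinuousAdd A τ _)
    (hmul : @ContinuousMul A τ _) : semiringCoinduced f t ≤ τ ↔ Continuous[t, τ] f :=
  ⟨fun h => continuous_le_rng h (continuous_semiringCoinduced f t),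
    fun hf => sInf_le ⟨hadd, hmul, continuous_iff_coinduced_le.1 hf⟩⟩

theorem continuous_semiringCoinduced_dom {B F : Type*} [Add B] [Mul B] [FunLike F A B]
    [AddHomClass F A B] [MulHomClass F A B] (tB : TopologicalSpace B)
    (hadd : @ContinuousAdd B tB _) (hmul : @ContinuousMul B tB _) (φ : F) :
    Continuous[semiringCoinduced f t, tB] φ ↔ Continuous[t, tB] (φ ∘ f) := by
  rw [continuous_iff_le_induced,
    semiringCoinduced_le_iff f t (continuousAdd_induced φ) (continuousMul_induced φ),
    continuous_induced_rng]

end SemiringCoinduced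

theorem universal_topology_on_semiring_general {X : Type v} {A : Type w}
    [TopologicalSpace X] [CommSemiring A] (ψ : X → A) :
    ∃ τ : TopologicalSpace A,
      (@ContinuousAdd A τ _) ∧ (@ContinuousMul A τ _) ∧ (@Continuous X A _ τ ψ) ∧
      ∀ (B : Type u) [CommSemiring B] [Nontrivial B] (tB : TopologicalSpace B),
        @ContinuousAdd B tB _ → @ContinuousMul B tB _ →
        ∀ φ : A →+* B,
          (@Continuous A B τ tB φ ↔ @Continuous X B _ tB fun x => φ (ψ x)) :=
  ⟨semiringCoinduced ψ ‹_›, continuousAdd_semiringCoinduced ψ _,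
    continuousMul_semiringCoinduced ψ _, continuous_semiringCoinduced ψ _,
    fun _ _ _ tB hadd hmul φ => continuous_semiringCoinduced_dom ψ _ tB hadd hmul φ⟩

theorem universal_topology_on_semiring {X : Type v} {A : Type w}
    [TopologicalSpace X] [CommSemiring A] [Nontrivial A] (ψ : X → A) :
    ∃ τ : TopologicalSpace A,
      (@ContinuousAdd A τ _) ∧ (@ContinuousMul A τ _) ∧ (@Continuous X A _ τ ψ) ∧
      ∀ (B : Type u) [CommSemiring B] [Nontrivial B] (tB : TopologicalSpace B),
        @ContinuousAdd B tB _ → @ContinuousMul B tB _ →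
        ∀ φ : A →+* B,
          (@Continuous A B τ tB φ ↔ @Continuous X B _ tB fun x => φ (ψ x)) :=
  universal_topology_on_semiring_general ψ
end

section
/- Let φ : S → K be a semiring homomorphism between totally ordered semifields, each equipped with its canonical topology. Then the following are equivalent: (1) φ is continuous; (2) for every nonzero a ∈ K there exists a nonzero b ∈ S with φ(b) ≤ a; (3) for every nonzero a ∈ K there exists a nonzero b ∈ S with φ(b) < a. -/
/-- A totally ordered idempotent semifield, assumed different from the Boolean semifield `𝔹`. -/
class IdemTOSemifield (K : Type*) extends CommSemiring K, LinearOrder K where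
  add_eq_max : ∀ a b : K, a + b = max a b
  exists_inv : ∀ a : K, a ≠ 0 → ∃ b : K, a * b = 1
  exists_nontrivial_unit : ∃ a : K, a ≠ 0 ∧ a ≠ 1

/-- The canonical topology on a totally ordered semifield. -/
def canonicalTopology (K : Type*) [IdemTOSemifield K] : TopologicalSpace K :=
  TopologicalSpace.generateFrom
    {s : Set K | (∃ a : K, a ≠ 0 ∧ s = {a}) ∨ (∃ a : K, a ≠ 0 ∧ s = Set.Iic a)}

/-!
A neighbourhood of `0` in the canonical topology contains some `[0, b]` with `b ≠ 0`, while every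
nonzero point is isolated; so a map `f` with `f 0 = 0` is continuous exactly when each `[0, a]`,
`a ≠ 0`, has a preimage containing some `[0, b]`, `b ≠ 0`. Homomorphisms are monotone, so this
is condition (2). Conditions (2) and (3) agree because below every `a ≠ 0` lies a nonzero
`a * c < a`, for any `0 < c < 1` (such `c` exists because `K ≠ 𝔹`).
-/

namespace IdemTOSemifield

variable {K : Type*} [IdemTOSemifield K]

theorem le_iff_add_eq {a b : K} : a ≤ b ↔ a + b = b := by
  rw [add_eq_max, max_eq_right_iff]

theorem zero_le (a : K) : 0 ≤ a :=
  le_iff_add_eq.mpr (zero_add a)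

instance : Nontrivial K :=
  let ⟨a, ha, _⟩ := exists_nontrivial_unit (K := K)
  ⟨⟨a, 0, ha⟩⟩

theorem mul_le_mul_left (c : K) {a b : K} (h : a ≤ b) : c * a ≤ c * b := by
  rw [le_iff_add_eq] at h ⊢
  rw [← mul_add, h]

theorem mul_lt_mul_left {c a b : K} (hc : c ≠ 0) (h : a < b) : c * a < c * b := by
  refine (mul_le_mul_left c h.le).lt_of_ne fun hab => h.ne ?_
  obtain ⟨d, hcd⟩ := exists_inv c hc
  calc a = d * c * a := by rw [mul_comm d, hcd, one_mul]
    _ = d * c * b := by rw [mul_assoc, hab, ← mul_assoc]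
    _ = b := by rw [mul_comm d, hcd, one_mul]

theorem exists_pos_lt_one : ∃ c : K, 0 < c ∧ c < 1 := by
  obtain ⟨u, hu0, hu1⟩ := exists_nontrivial_unit (K := K)
  have hu_pos : 0 < u := (zero_le u).lt_of_ne' hu0
  rcases hu1.lt_or_gt with hu | hu
  · exact ⟨u, hu_pos, hu⟩
  · obtain ⟨v, huv⟩ := exists_inv u hu0
    have hv0 : v ≠ 0 := by
      rintro rfl
      exact zero_ne_one (by rwa [mul_zero] at huv)
    refine ⟨v, (zero_le v).lt_of_ne' hv0, ?_⟩
    simpa [mul_comm v, huv] using mul_lt_mul_left hv0 hu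

theorem exists_ne_zero_lt {a : K} (ha : a ≠ 0) : ∃ a' : K, a' ≠ 0 ∧ a' < a := by
  obtain ⟨c, hc0, hc1⟩ := exists_pos_lt_one (K := K)
  refine ⟨a * c, ?_, ?_⟩
  · simpa using (mul_lt_mul_left ha hc0).ne'
  · simpa using mul_lt_mul_left ha hc1

variable {S : Type*} [IdemTOSemifield S]

theorem monotone_of_addHomClass {F : Type*} [FunLike F S K] [AddHomClass F S K] (f : F) :
    Monotone f := fun a b h => by
  rw [le_iff_add_eq] at h ⊢
  rw [← map_add, h]

theorem forall_exists_map_le_iff_forall_exists_map_lt (f : S → K) :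
    (∀ a : K, a ≠ 0 → ∃ b : S, b ≠ 0 ∧ f b ≤ a) ↔
      ∀ a : K, a ≠ 0 → ∃ b : S, b ≠ 0 ∧ f b < a := by
  refine ⟨fun h a ha => ?_, fun h a ha => ?_⟩
  · obtain ⟨a', ha'0, ha'a⟩ := exists_ne_zero_lt ha
    obtain ⟨b, hb0, hba'⟩ := h a' ha'0
    exact ⟨b, hb0, hba'.trans_lt ha'a⟩
  · obtain ⟨b, hb0, hba⟩ := h a ha
    exact ⟨b, hb0, hba.le⟩

section CanonicalTopology

local instance : TopologicalSpace K := canonicalTopology K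

theorem isOpen_singleton_of_ne_zero {a : K} (ha : a ≠ 0) : IsOpen ({a} : Set K) :=
  .basic _ (.inl ⟨a, ha, rfl⟩)

theorem isOpen_Iic_of_ne_zero {a : K} (ha : a ≠ 0) : IsOpen (Set.Iic a) :=
  .basic _ (.inr ⟨a, ha, rfl⟩)

theorem exists_Iic_subset_of_isOpen {U : Set K} (hU : IsOpen U) (h0 : (0 : K) ∈ U) :
    ∃ b : K, b ≠ 0 ∧ Set.Iic b ⊆ U := by
  induction hU with
  | basic s hs =>
    rcases hs with ⟨a, ha, rfl⟩ | ⟨a, ha, rfl⟩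
    · exact absurd h0.symm ha
    · exact ⟨a, ha, subset_rfl⟩
  | univ => exact ⟨1, one_ne_zero, Set.subset_univ _⟩
  | inter u v _ _ ihu ihv =>
    obtain ⟨b, hb, hbu⟩ := ihu h0.1
    obtain ⟨c, hc, hcv⟩ := ihv h0.2
    refine ⟨min b c, min_rec' (· ≠ 0) hb hc, Set.subset_inter ?_ ?_⟩
    · exact (Set.Iic_subset_Iic.mpr (min_le_left b c)).trans hbu
    · exact (Set.Iic_subset_Iic.mpr (min_le_right b c)).trans hcv
  | sUnion T _ ih =>
    obtain ⟨t, ht, h0t⟩ := h0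
    obtain ⟨b, hb, hbt⟩ := ih t ht h0t
    exact ⟨b, hb, hbt.trans (Set.subset_sUnion_of_mem ht)⟩

theorem isOpen_iff {U : Set K} :
    IsOpen U ↔ ((0 : K) ∈ U → ∃ b : K, b ≠ 0 ∧ Set.Iic b ⊆ U) := by
  refine ⟨exists_Iic_subset_of_isOpen, fun h => isOpen_iff_forall_mem_open.mpr fun x hx => ?_⟩
  by_cases hx0 : x = 0
  · subst hx0
    obtain ⟨b, hb, hbU⟩ := h hx
    exact ⟨Set.Iic b, hbU, isOpen_Iic_of_ne_zero hb, zero_le b⟩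
  · exact ⟨{x}, Set.singleton_subset_iff.mpr hx, isOpen_singleton_of_ne_zero hx0, rfl⟩

theorem continuous_iff_forall_exists_map_le {f : S → K} (hf : Monotone f) (hf0 : f 0 = 0) :
    Continuous f ↔ ∀ a : K, a ≠ 0 → ∃ b : S, b ≠ 0 ∧ f b ≤ a := by
  refine continuous_generateFrom_iff.trans ⟨fun h a ha => ?_, fun h s hs => ?_⟩
  · obtain ⟨b, hb, hbU⟩ := exists_Iic_subset_of_isOpen (h _ (.inr ⟨a, ha, rfl⟩))
      (by simp [hf0, zero_le])
    exact ⟨b, hb, hbU le_rfl⟩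
  · rw [isOpen_iff]
    rcases hs with ⟨a, ha, rfl⟩ | ⟨a, ha, rfl⟩
    · intro h0
      exact absurd (hf0 ▸ h0 : (0 : K) = a).symm ha
    · intro _
      obtain ⟨b, hb, hba⟩ := h a ha
      exact ⟨b, hb, fun x hx => (hf hx).trans hba⟩

end CanonicalTopology

end IdemTOSemifield

theorem continuous_hom_of_tosemifields_tfae {S K : Type*}
    [IdemTOSemifield S] [IdemTOSemifield K] (φ : S →+* K) :
    ((@Continuous S K (canonicalTopology S) (canonicalTopology K) φ ↔
        ∀ a : K, a ≠ 0 → ∃ b : S, b ≠ 0 ∧ φ b ≤ a) ∧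
      ((∀ a : K, a ≠ 0 → ∃ b : S, b ≠ 0 ∧ φ b ≤ a) ↔
        ∀ a : K, a ≠ 0 → ∃ b : S, b ≠ 0 ∧ φ b < a)) :=
  ⟨IdemTOSemifield.continuous_iff_forall_exists_map_le
      (IdemTOSemifield.monotone_of_addHomClass φ) (map_zero φ),
    IdemTOSemifield.forall_exists_map_le_iff_forall_exists_map_lt φ⟩
end

section
/- Let S be a sub-semifield of the tropical semifield 𝕋 (with S ≠ 𝔹), let K be a totally ordered semifield, and let φ : S → K be a semiring homomorphism which is continuous with respect to the canonical topologies. Then φ is injective. -/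
private theorem nnreal_mul_max (a b c : NNReal) : a * max b c = max (a * b) (a * c) := by
  rcases le_total b c with h | h
  · rw [max_eq_right h, max_eq_right (mul_le_mul_right h a)]
  · rw [max_eq_left h, max_eq_left (mul_le_mul_right h a)]

private theorem nnreal_max_mul (a b c : NNReal) : max a b * c = max (a * c) (b * c) := by
  rcases le_total a b with h | h
  · rw [max_eq_right h, max_eq_right (mul_le_mul_left h c)]
  · rw [max_eq_left h, max_eq_left (mul_le_mul_left h c)]

/-- The tropical semifield `𝕋`, modelled as `[0, ∞)` with addition `max` and the usual
multiplication. -/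
def Trop : Type := NNReal

namespace Trop

/-- Regard a nonnegative real as an element of `Trop`. -/
def mk (x : NNReal) : Trop := x

/-- The underlying nonnegative real of an element of `Trop`. -/
def toNNReal (x : Trop) : NNReal := x

noncomputable instance instLinearOrder : LinearOrder Trop :=
  inferInstanceAs (LinearOrder NNReal)

noncomputable instance instAdd : Add Trop := ⟨fun a b => max a b⟩
instance instZero : Zero Trop := inferInstanceAs (Zero NNReal)
instance instMul : Mul Trop := inferInstanceAs (Mul NNReal)
instance instOne : One Trop := inferInstanceAs (One NNReal)

noncomputable instance instCommSemiring : CommSemiring Trop where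
  __ := (inferInstanceAs (CommMonoidWithZero NNReal) : CommMonoidWithZero Trop)
  add a b := a + b
  nsmul := nsmulRec
  add_assoc a b c := max_assoc a b c
  zero_add a := max_eq_right (show (0 : NNReal) ≤ toNNReal a from zero_le)
  add_zero a := max_eq_left (show (0 : NNReal) ≤ toNNReal a from zero_le)
  add_comm a b := max_comm a b
  left_distrib a b c := by exact nnreal_mul_max a b c
  right_distrib a b c := by exact nnreal_max_mul a b c

noncomputable instance instIdemTOSemifield : IdemTOSemifield Trop where
  add_eq_max a b := rfl
  exists_inv a ha :=
    ⟨mk (toNNReal a)⁻¹, by exact mul_inv_cancel₀ (a := toNNReal a) (fun h => ha h)⟩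
  exists_nontrivial_unit :=
    ⟨mk 2, fun h => two_ne_zero (show (2 : NNReal) = 0 from h),
      fun h => by
        have : (2 : NNReal) = 1 := h
        norm_num at this⟩

end Trop

/-- `S` is (isomorphic to) a sub-semifield of the tropical semifield `𝕋` (and `S ≠ 𝔹`). -/
class TropSub (S : Type*) extends IdemTOSemifield S where
  emb : S →+* Trop
  emb_injective : Function.Injective emb


section Aux

open IdemTOSemifield

variable {R : Type*} [IdemTOSemifield R]

private theorem idem_zero_ne_one : (0 : R) ≠ 1 := by
  intro h
  obtain ⟨a, ha0, _⟩ := exists_nontrivial_unit (K := R)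
  exact ha0 (by calc a = a * 1 := (mul_one a).symm
    _ = a * 0 := by rw [h]
    _ = 0 := mul_zero a)

private theorem idem_zero_le (a : R) : (0 : R) ≤ a := by
  have h := zero_add a
  rw [add_eq_max] at h
  exact max_eq_right_iff.mp h

private theorem idem_le_iff_add {a b : R} : a ≤ b ↔ a + b = b := by
  rw [add_eq_max]; exact max_eq_right_iff.symm

private theorem idem_mul_le_mul_left (c : R) {a b : R} (h : a ≤ b) : c * a ≤ c * b := by
  rw [idem_le_iff_add] at h ⊢
  rw [← mul_add, h]

private theorem idem_mul_le_mul_right (c : R) {a b : R} (h : a ≤ b) : a * c ≤ b * c := by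
  rw [mul_comm a c, mul_comm b c]; exact idem_mul_le_mul_left c h

variable {R' : Type*} [IdemTOSemifield R']

private theorem idem_hom_mono (ψ : R →+* R') {a b : R} (h : a ≤ b) : ψ a ≤ ψ b := by
  rw [idem_le_iff_add] at h ⊢
  rw [← map_add, h]

private theorem idem_hom_le_iff (ψ : R →+* R') (hinj : Function.Injective ψ) {a b : R} :
    a ≤ b ↔ ψ a ≤ ψ b := by
  constructor
  · exact idem_hom_mono ψ
  · intro h
    rw [idem_le_iff_add] at h ⊢
    exact hinj (by rw [map_add, h])

private theorem idem_hom_ne_zero (ψ : R →+* R') {a : R} (ha : a ≠ 0) : ψ a ≠ 0 := by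
  obtain ⟨b, hb⟩ := exists_inv a ha
  intro h
  have : (0 : R') = 1 := by
    calc (0 : R') = ψ a * ψ b := by rw [h, zero_mul]
    _ = ψ (a * b) := (map_mul ψ a b).symm
    _ = 1 := by rw [hb, map_one]
  exact idem_zero_ne_one this

/-- every open set containing `0` contains an interval `Set.Iic a` with `a ≠ 0`. -/
private theorem idem_open_zero_mem {U : Set R}
    (h : TopologicalSpace.GenerateOpen
      {s : Set R | (∃ a : R, a ≠ 0 ∧ s = {a}) ∨ (∃ a : R, a ≠ 0 ∧ s = Set.Iic a)} U) :
    (0 : R) ∈ U → ∃ a : R, a ≠ 0 ∧ Set.Iic a ⊆ U := by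
  induction h with
  | basic s hs =>
    intro h0
    rcases hs with ⟨a, ha, rfl⟩ | ⟨a, ha, rfl⟩
    · exact absurd (Set.mem_singleton_iff.mp h0).symm ha
    · exact ⟨a, ha, subset_rfl⟩
  | univ =>
    intro _
    obtain ⟨a, ha, _⟩ := exists_nontrivial_unit (K := R)
    exact ⟨a, ha, Set.subset_univ _⟩
  | inter s t _ _ ihs iht =>
    intro h0
    obtain ⟨a, ha, hsa⟩ := ihs h0.1
    obtain ⟨b, hb, htb⟩ := iht h0.2
    refine ⟨min a b, ?_, fun x hx =>
      ⟨hsa (le_trans hx (min_le_left a b)), htb (le_trans hx (min_le_right a b))⟩⟩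
    rcases min_choice a b with h | h <;> rw [h] <;> assumption
  | sUnion T _ ih =>
    intro h0
    obtain ⟨s, hs, h0s⟩ := h0
    obtain ⟨a, ha, hsub⟩ := ih s hs h0s
    exact ⟨a, ha, hsub.trans (Set.subset_sUnion_of_mem hs)⟩

end Aux

private theorem trop_toNNReal_pow (a : Trop) (n : ℕ) :
    Trop.toNNReal (a ^ n) = (Trop.toNNReal a) ^ n := by
  induction n with
  | zero => rw [pow_zero, pow_zero]; rfl
  | succ n ih => rw [pow_succ, pow_succ, ← ih]; rfl

/-!
Statement 3: a continuous homomorphism of totally ordered semifields from a sub-semifield of `𝕋`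
(different from `𝔹`) is injective.
-/

theorem continuous_hom_from_subsemifield_of_trop_injective {S K : Type*}
    [TropSub S] [IdemTOSemifield K] (φ : S →+* K)
    (hφ : @Continuous S K (canonicalTopology S) (canonicalTopology K) φ) :
    Function.Injective φ := by
  classical
  have hK01 : (0 : K) ≠ 1 := idem_zero_ne_one
  intro x y hxy
  by_contra hne
  obtain ⟨u, v, huv, hφuv⟩ : ∃ u v : S, u < v ∧ φ u = φ v := by
    rcases lt_trichotomy x y with h | h | h
    · exact ⟨x, y, h, hxy⟩
    · exact absurd h hne
    · exact ⟨y, x, h, hxy.symm⟩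
  -- u ≠ 0
  have hu0 : u ≠ 0 := by
    rintro rfl
    exact idem_hom_ne_zero φ huv.ne' (by rw [← hφuv, map_zero])
  obtain ⟨c, hc⟩ := IdemTOSemifield.exists_inv u hu0
  have hc0 : c ≠ 0 := by
    intro h
    rw [h, mul_zero] at hc
    exact idem_zero_ne_one (R := S) hc
  set t : S := v * c with ht
  have ht1 : 1 < t := by
    have hle : (1 : S) ≤ t := hc ▸ idem_mul_le_mul_right c huv.le
    refine lt_of_le_of_ne hle fun h => ?_
    apply huv.ne
    calc u = u * 1 := (mul_one u).symm
      _ = u * (v * c) := by rw [h, ht]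
      _ = v * (u * c) := by ring
      _ = v := by rw [hc, mul_one]
  have hφt : φ t = 1 := by
    calc φ t = φ v * φ c := map_mul φ v c
      _ = φ u * φ c := by rw [hφuv]
      _ = φ (u * c) := (map_mul φ u c).symm
      _ = 1 := by rw [hc, map_one]
  -- order embedding into Trop
  let e : S →+* Trop := TropSub.emb
  have he : Function.Injective e := TropSub.emb_injective
  -- t > 1 in Trop, as NNReal
  have het : (1 : NNReal) < Trop.toNNReal (e t) := by
    have h1 : e 1 < e t := lt_of_le_of_ne (idem_hom_mono e ht1.le)
      (fun h => ht1.ne (he h))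
    rw [map_one] at h1
    exact h1
  -- key claim: φ s = 1 for all nonzero s
  have key : ∀ s : S, s ≠ 0 → φ s = 1 := by
    intro s hs
    have hes : (0 : NNReal) < Trop.toNNReal (e s) := by
      rcases eq_or_lt_of_le ((zero_le : (0 : NNReal) ≤ Trop.toNNReal (e s))) with h | h
      · exact absurd (show e s = (0 : Trop) from h.symm)
          (idem_hom_ne_zero e hs)
      · exact h
    -- upper bound : φ s ≤ 1
    obtain ⟨n, hn⟩ := pow_unbounded_of_one_lt (Trop.toNNReal (e s)) het
    have hstn : s ≤ t ^ n := by
      rw [idem_hom_le_iff e he, map_pow]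
      show Trop.toNNReal (e s) ≤ Trop.toNNReal ((e t) ^ n)
      rw [trop_toNNReal_pow]
      exact hn.le
    have hupper : φ s ≤ 1 := by
      have := idem_hom_mono φ hstn
      rwa [map_pow, hφt, one_pow] at this
    -- lower bound : 1 ≤ φ s
    obtain ⟨m, hm⟩ := pow_unbounded_of_one_lt (Trop.toNNReal (e s))⁻¹ het
    have hone : (1 : S) ≤ s * t ^ m := by
      rw [idem_hom_le_iff e he, map_one, map_mul, map_pow]
      show (1 : NNReal) ≤ Trop.toNNReal (e s) * Trop.toNNReal ((e t) ^ m)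
      rw [trop_toNNReal_pow]
      calc (1 : NNReal) = Trop.toNNReal (e s) * (Trop.toNNReal (e s))⁻¹ :=
            (mul_inv_cancel₀ hes.ne').symm
        _ ≤ Trop.toNNReal (e s) * (Trop.toNNReal (e t)) ^ m :=
            mul_le_mul_right hm.le _
    have hlower : (1 : K) ≤ φ s := by
      have := idem_hom_mono φ hone
      rwa [map_one, map_mul, map_pow, hφt, one_pow, mul_one] at this
    exact le_antisymm hupper hlower
  -- pick β in K with 0 ≠ β < 1
  obtain ⟨β, hβ0, hβ1⟩ : ∃ β : K, β ≠ 0 ∧ β < 1 := by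
    obtain ⟨a, ha0, ha1⟩ := IdemTOSemifield.exists_nontrivial_unit (K := K)
    rcases lt_or_gt_of_ne ha1 with h | h
    · exact ⟨a, ha0, h⟩
    · obtain ⟨b, hb⟩ := IdemTOSemifield.exists_inv a ha0
      have hb0 : b ≠ 0 := by
        intro hb0
        rw [hb0, mul_zero] at hb
        exact hK01 hb
      refine ⟨b, hb0, ?_⟩
      by_contra hble
      push_neg at hble
      have : a ≤ 1 := by
        calc a = a * 1 := (mul_one a).symm
          _ ≤ a * b := idem_mul_le_mul_left a hble
          _ = 1 := hb
      exact absurd h (not_lt.mpr this)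
  -- the preimage of Iic β is {0}
  have hIic : @IsOpen K (canonicalTopology K) (Set.Iic β) :=
    TopologicalSpace.GenerateOpen.basic _ (Or.inr ⟨β, hβ0, rfl⟩)
  have hpre : @IsOpen S (canonicalTopology S) (φ ⁻¹' Set.Iic β) :=
    @Continuous.isOpen_preimage S K (canonicalTopology S) (canonicalTopology K) φ hφ _ hIic
  have hpre_eq : φ ⁻¹' Set.Iic β = {0} := by
    ext s
    simp only [Set.mem_preimage, Set.mem_Iic, Set.mem_singleton_iff]
    constructor
    · intro h
      by_contra hs
      rw [key s hs] at h
      exact absurd (lt_of_lt_of_le hβ1 h) (lt_irrefl β)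
    · rintro rfl
      rw [map_zero]
      exact idem_zero_le β
  rw [hpre_eq] at hpre
  obtain ⟨a, ha, hsub⟩ := idem_open_zero_mem hpre rfl
  exact ha (hsub (le_refl a))
end

section
/- Let X be a topological space, let K and K' be totally ordered semifields each carrying its canonical topology, let φ : X → K be a function, and let ψ : K → K' be an injective semiring homomorphism. If the composition ψ ∘ φ : X → K' is continuous, then φ is continuous. -/
/-!
In an idempotent semiring `a ≤ b` iff `a + b = b`, so an injective semiring homomorphism `ψ`
is an order embedding. Hence the subbasic open sets `{a}` and `[0, a]` (`a ≠ 0`) of `K` are the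
preimages under `ψ` of the subbasic open sets `{ψ a}` and `[0, ψ a]` of `K'`, so the topology that
`ψ` induces from `K'` is finer than the canonical topology of `K`.
-/

open Function TopologicalSpace Topology

namespace IdemTOSemifield

variable {K K' : Type*} [IdemTOSemifield K] [IdemTOSemifield K']

theorem add_eq_right_iff_le {a b : K} : a + b = b ↔ a ≤ b := by
  rw [add_eq_max]
  exact max_eq_right_iff

theorem map_le_map_iff_of_injective {ψ : K →+* K'} (hψ : Injective ψ) {a b : K} :
    ψ a ≤ ψ b ↔ a ≤ b := by
  rw [← add_eq_right_iff_le, ← add_eq_right_iff_le, ← map_add, hψ.eq_iff]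

theorem isOpen_singleton_canonical {a : K} (ha : a ≠ 0) :
    IsOpen[canonicalTopology K] {a} :=
  isOpen_generateFrom_of_mem (Or.inl ⟨a, ha, rfl⟩)

theorem isOpen_Iic_canonical {a : K} (ha : a ≠ 0) :
    IsOpen[canonicalTopology K] (Set.Iic a) :=
  isOpen_generateFrom_of_mem (Or.inr ⟨a, ha, rfl⟩)

theorem induced_canonicalTopology_le {ψ : K →+* K'} (hψ : Injective ψ) :
    (canonicalTopology K').induced ψ ≤ canonicalTopology K := by
  refine le_generateFrom ?_
  rintro s (⟨a, ha, rfl⟩ | ⟨a, ha, rfl⟩)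
  · refine ⟨{ψ a}, isOpen_singleton_canonical ((map_ne_zero_iff ψ hψ).2 ha), ?_⟩
    ext x
    simp [hψ.eq_iff]
  · refine ⟨Set.Iic (ψ a), isOpen_Iic_canonical ((map_ne_zero_iff ψ hψ).2 ha), ?_⟩
    ext x
    simp [map_le_map_iff_of_injective hψ]

end IdemTOSemifield

theorem continuous_of_injective_comp_continuous {X K K' : Type*} [TopologicalSpace X]
    [IdemTOSemifield K] [IdemTOSemifield K'] (φ : X → K) (ψ : K →+* K')
    (hψ : Function.Injective ψ)
    (h : @Continuous X K' _ (canonicalTopology K') fun x => ψ (φ x)) :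
    @Continuous X K _ (canonicalTopology K) φ :=
  continuous_le_rng (IdemTOSemifield.induced_canonicalTopology_le hψ)
    (continuous_induced_rng.2 h)
end

section
/- Let φ : S → K be a semiring homomorphism of totally ordered semifields, and suppose there exist a totally ordered abelian group G and a group isomorphism θ : K^× → S^× ×_lex G which is also an order isomorphism (where S^× ×_lex G carries the lexicographic order) such that θ(φ(b)) = (b, 1_G) for all nonzero b ∈ S. Then φ is continuous with respect to the canonical topologies on S and K. -/
section Aux

variable {S : Type*} [IdemTOSemifield S]

theorem IdemTOSemifield.nontrivial' : Nontrivial S := by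
  obtain ⟨a, ha0, _⟩ := IdemTOSemifield.exists_nontrivial_unit (K := S)
  exact ⟨a, 0, ha0⟩

instance (priority := 100) : Nontrivial S := IdemTOSemifield.nontrivial'

theorem IdemTOSemifield.le_iff_add (a b : S) : a ≤ b ↔ a + b = b := by
  rw [IdemTOSemifield.add_eq_max, max_eq_right_iff]

theorem IdemTOSemifield.zero_le' (a : S) : (0 : S) ≤ a := by
  rw [IdemTOSemifield.le_iff_add, zero_add]

theorem IdemTOSemifield.mul_le_mul_left'' {a b : S} (h : a ≤ b) (c : S) :
    c * a ≤ c * b := by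
  rw [IdemTOSemifield.le_iff_add] at h ⊢
  rw [← mul_add, h]

/-- Build a unit out of a nonzero element. -/
noncomputable def IdemTOSemifield.unitOf {a : S} (ha : a ≠ 0) : Sˣ where
  val := a
  inv := Classical.choose (IdemTOSemifield.exists_inv a ha)
  val_inv := Classical.choose_spec (IdemTOSemifield.exists_inv a ha)
  inv_val := by
    rw [mul_comm]; exact Classical.choose_spec (IdemTOSemifield.exists_inv a ha)

@[simp] theorem IdemTOSemifield.unitOf_coe {a : S} (ha : a ≠ 0) :
    ((IdemTOSemifield.unitOf ha : Sˣ) : S) = a := rfl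

theorem IdemTOSemifield.exists_lt_of_ne_zero {s : S} (hs : s ≠ 0) :
    ∃ c : S, c ≠ 0 ∧ c < s := by
  obtain ⟨u, hu0, hu1⟩ := IdemTOSemifield.exists_nontrivial_unit (K := S)
  obtain ⟨v, hv⟩ := IdemTOSemifield.exists_inv u hu0
  have hv0 : v ≠ 0 := by
    rintro rfl
    rw [mul_zero] at hv
    exact one_ne_zero hv.symm
  obtain ⟨w, hw0, hw1⟩ : ∃ w : S, w ≠ 0 ∧ w < 1 := by
    rcases lt_or_gt_of_ne hu1 with h | h
    · exact ⟨u, hu0, h⟩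
    · refine ⟨v, hv0, ?_⟩
      by_contra hle
      push_neg at hle
      have h2 : u * 1 ≤ u * v := IdemTOSemifield.mul_le_mul_left'' hle u
      rw [mul_one, hv] at h2
      exact absurd h2 (not_le.mpr h)
  obtain ⟨w', hw'⟩ := IdemTOSemifield.exists_inv w hw0
  obtain ⟨s', hs'⟩ := IdemTOSemifield.exists_inv s hs
  refine ⟨s * w, ?_, ?_⟩
  · intro h0
    have : (s * w) * (s' * w') = 0 := by rw [h0, zero_mul]
    have h1 : (s * w) * (s' * w') = 1 := by
      rw [show (s * w) * (s' * w') = (s * s') * (w * w') by ring, hs', hw', mul_one]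
    rw [h1] at this
    exact one_ne_zero this
  · have hle : s * w ≤ s * 1 := IdemTOSemifield.mul_le_mul_left'' (le_of_lt hw1) s
    rw [mul_one] at hle
    refine lt_of_le_of_ne hle ?_
    intro heq
    have : w = 1 := by
      have := congrArg (fun x => s' * x) heq
      simp only [← mul_assoc, mul_comm s' s, hs', one_mul] at this
      exact this
    exact (ne_of_lt hw1) this

theorem IdemTOSemifield.isOpen_Iic {a : S} (ha : a ≠ 0) :
    @IsOpen S (canonicalTopology S) (Set.Iic a) :=
  TopologicalSpace.GenerateOpen.basic _ (Or.inr ⟨a, ha, rfl⟩)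

theorem IdemTOSemifield.isOpen_singleton {a : S} (ha : a ≠ 0) :
    @IsOpen S (canonicalTopology S) {a} :=
  TopologicalSpace.GenerateOpen.basic _ (Or.inl ⟨a, ha, rfl⟩)

theorem IdemTOSemifield.isOpen_Iio {s : S} (hs : s ≠ 0) :
    @IsOpen S (canonicalTopology S) (Set.Iio s) := by
  have heq : Set.Iio s = ⋃ c : {c : S // c ≠ 0 ∧ c < s}, Set.Iic c.1 := by
    ext x
    simp only [Set.mem_Iio, Set.mem_iUnion, Set.mem_Iic]
    constructor
    · intro hx
      rcases eq_or_ne x 0 with rfl | hx0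
      · obtain ⟨c, hc0, hcs⟩ := IdemTOSemifield.exists_lt_of_ne_zero hs
        exact ⟨⟨c, hc0, hcs⟩, IdemTOSemifield.zero_le' c⟩
      · exact ⟨⟨x, hx0, hx⟩, le_refl x⟩
    · rintro ⟨⟨c, hc0, hcs⟩, hxc⟩
      exact lt_of_le_of_lt hxc hcs
  rw [heq]
  exact @isOpen_iUnion S _ (canonicalTopology S) _
    (fun c => IdemTOSemifield.isOpen_Iic c.2.1)

end Aux

/-!
Statement 5: if `φ : S → K` induces a lexicographic product decomposition `K^× ≅ S^× ×ₗₑₓ G`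
identifying `S^×` with the first factor, then `φ` is continuous for the canonical topologies.
-/

theorem continuous_of_lex_product_decomposition {S K G : Type*}
    [IdemTOSemifield S] [IdemTOSemifield K] [CommGroup G] [LinearOrder G] [IsOrderedMonoid G]
    (φ : S →+* K) (θ : Kˣ ≃* Sˣ × G)
    (hord : ∀ x y : Kˣ, ((x : K) ≤ (y : K)) ↔
      (((θ x).1 : S) < ((θ y).1 : S) ∨ ((θ x).1 = (θ y).1 ∧ (θ x).2 ≤ (θ y).2)))
    (hφ : ∀ b : Sˣ, θ (Units.map (φ : S →* K) b) = (b, 1)) :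
    @Continuous S K (canonicalTopology S) (canonicalTopology K) φ := by
  classical
  -- injectivity of φ
  have hφu : ∀ {x : S} (hx : x ≠ 0),
      θ (Units.map (φ : S →* K) (IdemTOSemifield.unitOf hx)) =
        (IdemTOSemifield.unitOf hx, 1) := fun {x} hx => hφ _
  have hφne : ∀ {x : S}, x ≠ 0 → φ x ≠ 0 := by
    intro x hx
    have : φ x = ((Units.map (φ : S →* K) (IdemTOSemifield.unitOf hx) : Kˣ) : K) := rfl
    rw [this]
    exact Units.ne_zero _
  have hinj : Function.Injective φ := by
    intro x y hxy
    rcases eq_or_ne x 0 with rfl | hx0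
    · rcases eq_or_ne y 0 with rfl | hy0
      · rfl
      · exact absurd hxy.symm (by rw [map_zero]; exact hφne hy0)
    · rcases eq_or_ne y 0 with rfl | hy0
      · exact absurd hxy (by rw [map_zero]; exact hφne hx0)
      · have hu : Units.map (φ : S →* K) (IdemTOSemifield.unitOf hx0) =
            Units.map (φ : S →* K) (IdemTOSemifield.unitOf hy0) := Units.ext hxy
        have := congrArg θ hu
        rw [hφu hx0, hφu hy0] at this
        have := congrArg Prod.fst this
        simpa using congrArg (fun (u : Sˣ) => (u : S)) this
  apply continuous_generateFrom_iff.mpr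
  rintro t (⟨a, ha, rfl⟩ | ⟨a, ha, rfl⟩)
  · -- singleton case
    by_cases h : ∃ b : S, φ b = a
    · obtain ⟨b, rfl⟩ := h
      have hb : b ≠ 0 := by
        rintro rfl
        rw [map_zero] at ha
        exact ha rfl
      have : φ ⁻¹' {φ b} = {b} := by
        ext x
        simp only [Set.mem_preimage, Set.mem_singleton_iff]
        exact ⟨fun hx => hinj hx, fun hx => by rw [hx]⟩
      rw [this]
      exact IdemTOSemifield.isOpen_singleton hb
    · have : φ ⁻¹' {a} = ∅ := by
        ext x
        simp only [Set.mem_preimage, Set.mem_singleton_iff, Set.mem_empty_iff_false,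
          iff_false]
        exact fun hx => h ⟨x, hx⟩
      rw [this]
      exact @isOpen_empty S (canonicalTopology S)
  · -- Iic case
    set au : Kˣ := IdemTOSemifield.unitOf ha with hau
    have hau_coe : ((au : Kˣ) : K) = a := rfl
    have key : ∀ {x : S} (hx : x ≠ 0), (φ x ≤ a ↔
        ((IdemTOSemifield.unitOf hx : Sˣ) : S) < (((θ au).1 : Sˣ) : S) ∨
          ((IdemTOSemifield.unitOf hx : Sˣ) = (θ au).1 ∧ (1 : G) ≤ (θ au).2)) := by
      intro x hx
      have h1 := hord (Units.map (φ : S →* K) (IdemTOSemifield.unitOf hx)) au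
      rw [hφu hx] at h1
      exact h1
    rcases le_or_gt 1 (θ au).2 with hg | hg
    · -- preimage is Iic of the first component
      have heq : φ ⁻¹' Set.Iic a = Set.Iic (((θ au).1 : Sˣ) : S) := by
        ext x
        simp only [Set.mem_preimage, Set.mem_Iic]
        rcases eq_or_ne x 0 with rfl | hx0
        · simp only [map_zero]
          exact ⟨fun _ => IdemTOSemifield.zero_le' _, fun _ => IdemTOSemifield.zero_le' _⟩
        · rw [key hx0]
          constructor
          · rintro (h | ⟨h, -⟩)
            · exact le_of_lt h
            · exact le_of_eq (congrArg (fun (u : Sˣ) => (u : S)) h)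
          · intro h
            rcases lt_or_eq_of_le h with h' | h'
            · exact Or.inl h'
            · exact Or.inr ⟨Units.ext h', hg⟩
      rw [heq]
      exact IdemTOSemifield.isOpen_Iic (Units.ne_zero _)
    · -- preimage is Iio of the first component
      have heq : φ ⁻¹' Set.Iic a = Set.Iio (((θ au).1 : Sˣ) : S) := by
        ext x
        simp only [Set.mem_preimage, Set.mem_Iic, Set.mem_Iio]
        rcases eq_or_ne x 0 with rfl | hx0
        · simp only [map_zero]
          constructor
          · intro _
            exact lt_of_le_of_ne (IdemTOSemifield.zero_le' _) (Ne.symm (Units.ne_zero _))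
          · intro _
            exact IdemTOSemifield.zero_le' _
        · rw [key hx0]
          constructor
          · rintro (h | ⟨-, h⟩)
            · exact h
            · exact absurd h (not_le.mpr hg)
          · exact fun h => Or.inl h
      rw [heq]
      exact IdemTOSemifield.isOpen_Iio (Units.ne_zero _)
end

section
/- Let C be a real k × m matrix, and let C' be obtained from C either by multiplying some row of C by a positive real constant, or by adding a real multiple of row i to row j where i < j. Then for all vectors w, w' ∈ ℝ^m, the comparison C·w ≤_lex C·w' holds if and only if C'·w ≤_lex C'·w' holds. -/
/-!
Statement 6: downward gaussian elimination (multiplying a row by a positive constant, or adding a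
multiple of a row to a lower row) does not change lexicographic comparisons of products `C·w`.
-/

private lemma lex_lt_iff' {k : ℕ} (u v : Fin k → ℝ) :
    toLex u < toLex v ↔ ∃ i, (∀ j, j < i → u j = v j) ∧ u i < v i :=
  Iff.rfl

private lemma prefix_equiv {k : ℕ} (u v u' v' : Fin k → ℝ)
    (h : ∀ a : Fin k, (∀ b, b < a → u b = v b) →
      ((u a = v a ↔ u' a = v' a) ∧ (u a < v a ↔ u' a < v' a))) :
    ∀ n : ℕ, (∀ b : Fin k, (b : ℕ) < n → u b = v b) ↔ (∀ b : Fin k, (b : ℕ) < n → u' b = v' b) := by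
  intro n
  induction n with
  | zero => simp
  | succ n ih =>
    constructor
    · intro H b hb
      rcases lt_or_eq_of_le (Nat.lt_succ_iff.mp hb) with hb' | hb'
      · exact (ih.mp (fun c hc => H c (hc.trans (Nat.lt_succ_self n)))) b hb'
      · have hpre : ∀ c, c < b → u c = v c := fun c hc => H c (by omega)
        exact ((h b hpre).1).mp (H b hb)
    · intro H b hb
      rcases lt_or_eq_of_le (Nat.lt_succ_iff.mp hb) with hb' | hb'
      · exact (ih.mpr (fun c hc => H c (hc.trans (Nat.lt_succ_self n)))) b hb'
      · have hpre : ∀ c, c < b → u c = v c := by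
          intro c hc
          exact (ih.mpr (fun d hd => H d (by omega))) c (by omega)
        exact ((h b hpre).1).mpr (H b hb)

private lemma lex_le_invariant {k : ℕ} (u v u' v' : Fin k → ℝ)
    (h : ∀ a : Fin k, (∀ b, b < a → u b = v b) →
      ((u a = v a ↔ u' a = v' a) ∧ (u a < v a ↔ u' a < v' a))) :
    (toLex u ≤ toLex v ↔ toLex u' ≤ toLex v') := by
  have hp := prefix_equiv u v u' v' h
  have heq : u = v ↔ u' = v' := by
    constructor
    · intro H
      funext b
      exact ((hp k).mp (fun c _ => by rw [H])) b b.isLt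
    · intro H
      funext b
      exact ((hp k).mpr (fun c _ => by rw [H])) b b.isLt
  have hlt : toLex u < toLex v ↔ toLex u' < toLex v' := by
    rw [lex_lt_iff', lex_lt_iff']
    constructor
    · rintro ⟨i, hpre, hi⟩
      refine ⟨i, ?_, ((h i hpre).2).mp hi⟩
      intro j hj
      exact ((hp i).mp (fun c hc => hpre c hc)) j hj
    · rintro ⟨i, hpre, hi⟩
      have hpre' : ∀ j, j < i → u j = v j := fun j hj =>
        ((hp i).mpr (fun c hc => hpre c hc)) j hj
      exact ⟨i, hpre', ((h i hpre').2).mpr hi⟩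
  rw [le_iff_lt_or_eq, le_iff_lt_or_eq]
  erw [hlt]
  constructor
  · rintro (H | H)
    · exact Or.inl H
    · exact Or.inr (toLex.injective.eq_iff.mpr (heq.mp (toLex.injective.eq_iff.mp H)) ▸ rfl)
  · rintro (H | H)
    · exact Or.inl H
    · exact Or.inr (congrArg toLex (heq.mpr (by simpa using congrArg ofLex H)))

theorem lex_comparison_invariant_under_row_operations {k m : ℕ}
    (C C' : Matrix (Fin k) (Fin m) ℝ)
    (h : (∃ (i : Fin k) (c : ℝ), 0 < c ∧ C' = C.updateRow i (c • C i)) ∨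
      (∃ (i j : Fin k) (c : ℝ), i < j ∧ C' = C.updateRow j (C j + c • C i))) :
    ∀ w w' : Fin m → ℝ,
      toLex (C.mulVec w) ≤ toLex (C.mulVec w') ↔
        toLex (C'.mulVec w) ≤ toLex (C'.mulVec w') := by
  intro w w'
  rcases h with ⟨i, c, hc, rfl⟩ | ⟨i, j, c, hij, rfl⟩
  · apply lex_le_invariant
    intro a hpre
    by_cases ha : a = i
    · subst ha
      have h1 : (C.updateRow a (c • C a)).mulVec w a = c * C.mulVec w a := by
        simp [Matrix.mulVec, Matrix.updateRow_apply, smul_dotProduct, dotProduct, Finset.mul_sum, mul_assoc, add_mul, Finset.sum_add_distrib]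
      have h2 : (C.updateRow a (c • C a)).mulVec w' a = c * C.mulVec w' a := by
        simp [Matrix.mulVec, Matrix.updateRow_apply, smul_dotProduct, dotProduct, Finset.mul_sum, mul_assoc, add_mul, Finset.sum_add_distrib]
      rw [h1, h2]
      constructor
      · exact ⟨fun H => by rw [H], fun H => mul_left_cancel₀ hc.ne' H⟩
      · exact (mul_lt_mul_iff_right₀ hc).symm
    · have h1 : (C.updateRow i (c • C i)).mulVec w a = C.mulVec w a := by
        simp [Matrix.mulVec, Matrix.updateRow_apply, ha]
      have h2 : (C.updateRow i (c • C i)).mulVec w' a = C.mulVec w' a := by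
        simp [Matrix.mulVec, Matrix.updateRow_apply, ha]
      rw [h1, h2]
      exact ⟨Iff.rfl, Iff.rfl⟩
  · apply lex_le_invariant
    intro a hpre
    by_cases ha : a = j
    · subst ha
      have hieq : C.mulVec w i = C.mulVec w' i := hpre i hij
      have h1 : (C.updateRow a (C a + c • C i)).mulVec w a
          = C.mulVec w a + c * C.mulVec w i := by
        simp [Matrix.mulVec, Matrix.updateRow_apply, add_dotProduct,
          smul_dotProduct, dotProduct, Finset.mul_sum, mul_assoc, add_mul, Finset.sum_add_distrib]
      have h2 : (C.updateRow a (C a + c • C i)).mulVec w' a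
          = C.mulVec w' a + c * C.mulVec w' i := by
        simp [Matrix.mulVec, Matrix.updateRow_apply, add_dotProduct,
          smul_dotProduct, dotProduct, Finset.mul_sum, mul_assoc, add_mul, Finset.sum_add_distrib]
      rw [h1, h2, ← hieq]
      constructor
      · exact ⟨fun H => by rw [H], fun H => by linarith [add_right_cancel H]⟩
      · exact (add_lt_add_iff_right _).symm
    · have h1 : (C.updateRow j (C j + c • C i)).mulVec w a = C.mulVec w a := by
        simp [Matrix.mulVec, Matrix.updateRow_apply, ha]
      have h2 : (C.updateRow j (C j + c • C i)).mulVec w' a = C.mulVec w' a := by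
        simp [Matrix.mulVec, Matrix.updateRow_apply, ha]
      rw [h1, h2]
      exact ⟨Iff.rfl, Iff.rfl⟩
end

section
/- Let S be a totally ordered semifield, M a commutative monoid, and A = S[M]. Let P ⊆ P' be prime congruences on A, both S-continuous. Then the sets of series converging at P and at P' coincide: a function f : M → S converges at P if and only if it converges at P'. -/
/-- A prime congruence on a commutative semiring: the congruence is proper and the quotient is
totally ordered with respect to the canonical order and cancellative. -/
structure IsPrimeCon {A : Type*} [CommSemiring A] (P : RingCon A) : Prop where
  proper : ¬ P 0 1
  totalOrd : ∀ a b : A, P (a + b) a ∨ P (a + b) b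
  cancel : ∀ a b c : A, ¬ P a 0 → P (a * b) (a * c) → P b c

/-- `x ≤_P y`: the image of `x` in `A/P` is at most that of `y` in the canonical order. -/
def leP {A : Type*} [CommSemiring A] (P : RingCon A) (x y : A) : Prop := P (x + y) y

/-- `x <_P y`: the image of `x` in `A/P` is strictly below that of `y`. -/
def ltP {A : Type*} [CommSemiring A] (P : RingCon A) (x y : A) : Prop := P (x + y) y ∧ ¬ P x y

/-- A prime congruence `P` on an `S`-algebra `A` (with structure map `ι`) is `S`-continuous:
for all `f, g` not in the ideal-kernel of `P` there is a nonzero `b ∈ S` with `ι b * g <_P f`. -/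
def SCont {S A : Type*} [CommSemiring S] [CommSemiring A] (ι : S →+* A) (P : RingCon A) : Prop :=
  ∀ f g : A, ¬ P f 0 → ¬ P g 0 → ∃ b : S, b ≠ 0 ∧ ltP P (ι b * g) f

/-- A series (a function `f : M → S`, thought of as `Σ_u f_u χ^u`) converges at a prime
congruence `P` on `S[M]` if for every `g ∈ S[M]` outside the ideal-kernel of `P` only finitely
many terms `f_u · χ^u` satisfy `g ≤_P f_u · χ^u`. -/
def SeriesConverges {S M : Type*} [IdemTOSemifield S] [AddCommMonoid M]
    (P : RingCon (AddMonoidAlgebra S M)) (f : M → S) : Prop :=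
  ∀ g : AddMonoidAlgebra S M, ¬ P g 0 →
    {u : M | leP P g (AddMonoidAlgebra.single u (f u))}.Finite

/-!
Both convergence conditions may be tested against constants `ι b` alone, since by `S`-continuity
every `g` outside the kernel dominates some `ι b`. Passing from `P` to `P'` only weakens
`ι b ≤ f_u χ^u`. Conversely, choose `ι b' <_{P'} ι b`: if `ι b ≤_{P'} f_u χ^u` then
`ι b' ≤_P f_u χ^u`, for otherwise totality of `A/P` would give `f_u χ^u ≤_{P'} ι b'` and hence
`ι b ≤_{P'} ι b'`.
-/

section RingCon

variable {A : Type*} [CommSemiring A]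

lemma leP_trans (P : RingCon A) {x y z : A} (hxy : leP P x y) (hyz : leP P y z) :
    leP P x z := by
  have hxyz : P ((x + y) + z) (y + z) := P.add hxy (P.refl z)
  rw [add_assoc] at hxyz
  exact P.trans (P.trans (P.add (P.refl x) (P.symm hyz)) hxyz) hyz

lemma leP_antisymm (P : RingCon A) {x y : A} (hxy : leP P x y) (hyx : leP P y x) : P x y :=
  P.trans (add_comm y x ▸ P.symm hyx) hxy

lemma RingCon.rel_zero_of_isUnit (P : RingCon A) {u : A} (hu : IsUnit u) (hu0 : P u 0) (x : A) :
    P x 0 := by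
  obtain ⟨v, rfl⟩ := hu
  simpa [mul_assoc] using P.mul (P.refl (x * ↑v⁻¹)) hu0

lemma IsPrimeCon.not_rel_of_isUnit {P : RingCon A} (hP : IsPrimeCon P) {u : A} (hu : IsUnit u) :
    ¬ P u 0 :=
  fun hu0 => hP.proper (P.symm (P.rel_zero_of_isUnit hu hu0 1))

lemma IsPrimeCon.leP_of_ltP_of_leP {P P' : RingCon A} (hP : IsPrimeCon P)
    (hsub : ∀ f g : A, P f g → P' f g) {x y z : A} (hxy : ltP P' x y) (hyz : leP P' y z) :
    leP P x z := by
  rcases hP.totalOrd x z with hzx | hxz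
  · have hzx' : leP P' z x := hsub _ _ (add_comm x z ▸ hzx)
    exact absurd (leP_antisymm P' hxy.1 (leP_trans P' hyz hzx')) hxy.2
  · exact hxz

end RingCon

section MonoidAlgebra

open AddMonoidAlgebra

variable {S M : Type*} [IdemTOSemifield S] [AddCommMonoid M]

lemma IdemTOSemifield.isUnit_of_ne_zero {b : S} (hb : b ≠ 0) : IsUnit b :=
  let ⟨c, hc⟩ := IdemTOSemifield.exists_inv b hb
  IsUnit.of_mul_eq_one c hc

lemma IsPrimeCon.not_rel_singleZeroRingHom {P : RingCon (AddMonoidAlgebra S M)}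
    (hP : IsPrimeCon P) {b : S} (hb : b ≠ 0) : ¬ P (singleZeroRingHom b) 0 :=
  hP.not_rel_of_isUnit ((IdemTOSemifield.isUnit_of_ne_zero hb).map _)

lemma seriesConverges_iff_forall_ne_zero {P : RingCon (AddMonoidAlgebra S M)}
    (hP : IsPrimeCon P) (hPc : SCont singleZeroRingHom P) (f : M → S) :
    SeriesConverges P f ↔
      ∀ b : S, b ≠ 0 → {u : M | leP P (singleZeroRingHom b) (single u (f u))}.Finite := by
  constructor
  · intro hconv b hb
    exact hconv _ (hP.not_rel_singleZeroRingHom hb)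
  · intro hconv g hg
    obtain ⟨b, hb, hbg⟩ := hPc g 1 hg (hP.not_rel_of_isUnit isUnit_one)
    rw [mul_one] at hbg
    exact (hconv b hb).subset fun u hu => leP_trans P hbg.1 hu

end MonoidAlgebra

theorem seriesConverges_iff_of_le {S M : Type*} [IdemTOSemifield S] [AddCommMonoid M]
    (P P' : RingCon (AddMonoidAlgebra S M))
    (hP : IsPrimeCon P) (hP' : IsPrimeCon P')
    (hPc : SCont (AddMonoidAlgebra.singleZeroRingHom) P)
    (hP'c : SCont (AddMonoidAlgebra.singleZeroRingHom) P')
    (hsub : ∀ f g : AddMonoidAlgebra S M, P f g → P' f g) :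
    ∀ f : M → S, SeriesConverges P f ↔ SeriesConverges P' f := by
  intro f
  rw [seriesConverges_iff_forall_ne_zero hP hPc, seriesConverges_iff_forall_ne_zero hP' hP'c]
  constructor
  · intro hconv b hb
    obtain ⟨b', hb', hb'b⟩ :=
      hP'c _ 1 (hP'.not_rel_singleZeroRingHom hb) (hP'.not_rel_of_isUnit isUnit_one)
    rw [mul_one] at hb'b
    exact (hconv b' hb').subset fun u hu => hP.leP_of_ltP_of_leP hsub hb'b hu
  · intro hconv b hb
    exact (hconv b hb).subset fun u hu => hsub _ _ hu
end
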